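/- arXiv:1805.04960 — 2 statements merged into one kernel-verified Lean document; each statement's English description precedes it below -/
import Mathlib

section
/- Let M be the Vámos matroid V₈ on ground set {a₁, a₁′, a₂, a₂′, b₁, b₁′, b₂, b₂′}, the rank-4 paving matroid whose non-spanning circuits are {a₁,a₁′,a₂,a₂′}, {a₁,a₁′,b₁,b₁′}, {a₁,a₁′,b₂,b₂′}, {a₂,a₂′,b₁,b₁′}, and {b₁,b₁′,b₂,b₂′}. Then there is no single-element extension of V₈ by a non-loop element p such that both {a₁,a₁′,p} and {b₁,b₁′,p} contain circuits through p lying on the lines spanned by {a₁,a₁′} and {b₁,b₁′} respectively; that is, no extension of V₈ by p has p ∈ cl({a₁,a₁′}) ∩ cl({b₁,b₁′}) with p not a loop. -/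
open Set

variable {α : Type*}

/-- The rank of a set in a matroid: the supremum of cardinalities of independent subsets. -/
noncomputable def mRk (M : Matroid α) (X : Set α) : ℕ :=
  sSup (Set.ncard '' {I | M.Indep I ∧ I ⊆ X})

/-- Local connectivity `⊓(S, T) = r(S) + r(T) − r(S ∪ T)`. -/
noncomputable def mConn (M : Matroid α) (S T : Set α) : ℤ :=
  (mRk M S : ℤ) + (mRk M T : ℤ) - (mRk M (S ∪ T) : ℤ)

/-- A circuit: a minimal dependent set. -/
def mCircuit (M : Matroid α) (C : Set α) : Prop :=
  M.Dep C ∧ ∀ D, D ⊂ C → ¬ M.Dep D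

/-- `M'` is a single-element extension of `M` by the element `p`:
`p` is a new element, the ground set grows by `p`, and deleting `p` recovers `M`. -/
def ExtBy (M' M : Matroid α) (p : α) : Prop :=
  p ∉ M.E ∧ M'.E = insert p M.E ∧ M'.restrict M.E = M

/-- `M'` is an extension of `M` by the two new elements `x` and `y`. -/
def ExtBy2 (M' M : Matroid α) (x y : α) : Prop :=
  x ∉ M.E ∧ y ∉ M.E ∧ x ≠ y ∧ M'.E = insert x (insert y M.E) ∧ M'.restrict M.E = M

/-- `(A, B)` is an exact 3-separation of `M`: a partition of the ground set with
`r(A) + r(B) − r(M) = 2`. -/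
def Exact3Sep (M : Matroid α) (A B : Set α) : Prop :=
  Disjoint A B ∧ A ∪ B = M.E ∧
    (mRk M A : ℤ) + (mRk M B : ℤ) - (mRk M M.E : ℤ) = 2

/-- An `A`-strand relative to the separation `(A, B)`: a minimal subset `S` of `A` with
`⊓(S, B) = 1`. -/
def Strand (M : Matroid α) (A B S : Set α) : Prop :=
  S ⊆ A ∧ mConn M S B = 1 ∧ ∀ S', S' ⊂ S → mConn M S' B ≠ 1

/-!
`p` lies on the planes `cl{a₁,a₁',a₂,a₂'}` and `cl{a₂,a₂',b₁,b₁'}`, which are distinct because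
their union has rank 4. By submodularity two distinct planes of a rank-4 matroid meet in at most
a line, here the line `cl{a₂,a₂'}`, so `p ∈ cl{a₂,a₂'}`; likewise `p ∈ cl{b₂,b₂'}`, using the
planes through `a₁a₁'b₂b₂'` and `b₁b₁'b₂b₂'`. But `{a₂,a₂',b₂,b₂'}` is independent, so these two
lines are skew and meet only in loops.
-/

open Function

namespace Matroid

theorem mem_closure_of_eRk_add_eRk_lt {M : Matroid α} {C C' L : Set α} {p : α}
    (hp : p ∈ M.E) (hpC : p ∈ M.closure C) (hpC' : p ∈ M.closure C') (hL : L ⊆ C ∩ C')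
    (hlt : M.eRk C + M.eRk C' < M.eRk L + 1 + M.eRk (C ∪ C')) : p ∈ M.closure L := by
  by_contra hpL
  have hins : M.eRk L + 1 ≤ M.eRk (M.closure C ∩ M.closure C') := by
    rw [← eRk_insert_eq_add_one ⟨hp, hpL⟩, ← eRk_insert_closure_eq]
    exact M.eRk_mono (insert_subset ⟨hpC, hpC'⟩ (subset_inter
      (M.closure_subset_closure (hL.trans inter_subset_left))
      (M.closure_subset_closure (hL.trans inter_subset_right))))
  have hsub := M.eRk_inter_add_eRk_union_le (M.closure C) (M.closure C')
  rw [eRk_union_closure_left_eq, eRk_union_closure_right_eq, eRk_closure_eq,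
    eRk_closure_eq] at hsub
  exact hlt.not_ge ((add_le_add hins le_rfl).trans hsub)

end Matroid

namespace ExtBy

variable {M' M : Matroid α} {p : α}

theorem mem_ground (h : ExtBy M' M p) : p ∈ M'.E :=
  h.2.1 ▸ mem_insert p M.E

theorem eRk_eq (h : ExtBy M' M p) {X : Set α} (hX : X ⊆ M.E) : M'.eRk X = M.eRk X := by
  rw [← h.2.2, Matroid.restrict_eRk_eq _ hX]

end ExtBy

/-- The elements `0, …, 7` stand for `a₁, a₁', a₂, a₂', b₁, b₁', b₂, b₂'`. -/
def vamosCircuits : Finset (Finset (Fin 8)) :=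
  {{0, 1, 2, 3}, {0, 1, 4, 5}, {0, 1, 6, 7}, {2, 3, 4, 5}, {4, 5, 6, 7}}

theorem card_of_mem_vamosCircuits : ∀ C ∈ vamosCircuits, C.card = 4 := by
  decide +kernel

/-- The rank in `V₈` of a set of at most four elements (meaningless for larger sets). -/
def vamosRk (S : Finset (Fin 8)) : ℕ :=
  if S ∈ vamosCircuits then 3 else S.card

def IsVamos (M : Matroid α) (v : Fin 8 → α) : Prop :=
  M.E = range v ∧ ∀ I, M.Indep I ↔ I ⊆ M.E ∧ I.ncard ≤ 4 ∧ ∀ C ∈ vamosCircuits, I ≠ v '' C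

theorem isVamos_vecCons {a₁ a₁' a₂ a₂' b₁ b₁' b₂ b₂' : α} {M : Matroid α}
    (hE : M.E = {a₁, a₁', a₂, a₂', b₁, b₁', b₂, b₂'})
    (hIndep : ∀ I : Set α, M.Indep I ↔ I ⊆ M.E ∧ I.ncard ≤ 4 ∧
      I ∉ ({{a₁, a₁', a₂, a₂'}, {a₁, a₁', b₁, b₁'}, {a₁, a₁', b₂, b₂'},
        {a₂, a₂', b₁, b₁'}, {b₁, b₁', b₂, b₂'}} : Set (Set α))) :
    IsVamos M ![a₁, a₁', a₂, a₂', b₁, b₁', b₂, b₂'] := by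
  refine ⟨?_, fun I => ?_⟩
  · simp only [hE, Matrix.range_cons, Matrix.range_empty, singleton_union, insert_empty_eq]
  · rw [hIndep]
    simp [vamosCircuits, Set.image_insert_eq]

namespace IsVamos

variable {M : Matroid α} {v : Fin 8 → α}

theorem image_subset_ground (hM : IsVamos M v) (S : Set (Fin 8)) : v '' S ⊆ M.E :=
  hM.1 ▸ image_subset_range v S

theorem indep_image_iff (hM : IsVamos M v) (hv : Injective v) (S : Finset (Fin 8)) :
    M.Indep (v '' S) ↔ S.card ≤ 4 ∧ S ∉ vamosCircuits := by
  simp [hM.2, hM.image_subset_ground, ncard_image_of_injective _ hv,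
    hv.image_injective.eq_iff]

theorem eRk_image (hM : IsVamos M v) (hv : Injective v) {S : Finset (Fin 8)} (hS : S.card ≤ 4) :
    M.eRk (v '' S) = vamosRk S := by
  unfold vamosRk
  split_ifs with hC
  · have hS4 := card_of_mem_vamosCircuits S hC
    apply le_antisymm
    · have hdep : M.Dep (v '' S) :=
        ⟨fun h => ((hM.indep_image_iff hv S).1 h).2 hC, hM.image_subset_ground _⟩
      have hlt := M.eRk_lt_encard_of_dep_of_finite (S.finite_toSet.image v) hdep
      rw [hv.encard_image, encard_coe_eq_coe_finsetCard, hS4] at hlt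
      exact Order.le_of_lt_add_one hlt
    · obtain ⟨x, hx⟩ : S.Nonempty := Finset.card_pos.1 (by omega)
      have hind : M.Indep (v '' (S.erase x)) := (hM.indep_image_iff hv _).2
        ⟨by simp [hx, hS4], fun h => by simpa [hx, hS4] using card_of_mem_vamosCircuits _ h⟩
      calc ((3 : ℕ) : ℕ∞) = M.eRk (v '' (S.erase x)) := by
            rw [hind.eRk_eq_encard, hv.encard_image, encard_coe_eq_coe_finsetCard,
              Finset.card_erase_of_mem hx, hS4]
        _ ≤ M.eRk (v '' S) := M.eRk_mono (image_mono (Finset.coe_subset.2 (S.erase_subset x)))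
  · rw [((hM.indep_image_iff hv S).2 ⟨hS, hC⟩).eRk_eq_encard, hv.encard_image,
      encard_coe_eq_coe_finsetCard]

/-- `hcomb` is a decidable condition on subsets of `Fin 8`; `T` is an independent subset of
`C ∪ C'` bounding its rank from below. -/
theorem mem_closure_of_extBy (hM : IsVamos M v) (hv : Injective v) {M' : Matroid α} {p : α}
    (hext : ExtBy M' M p) {C C' L T : Finset (Fin 8)}
    (hpC : p ∈ M'.closure (v '' C)) (hpC' : p ∈ M'.closure (v '' C'))
    (hcomb : L ⊆ C ∩ C' ∧ T ⊆ C ∪ C' ∧ C.card ≤ 4 ∧ C'.card ≤ 4 ∧ T.card ≤ 4 ∧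
      vamosRk C + vamosRk C' < vamosRk L + 1 + vamosRk T) :
    p ∈ M'.closure (v '' L) := by
  obtain ⟨hL, hT, hC, hC', hT4, hlt⟩ := hcomb
  have hrank {S : Finset (Fin 8)} (hS : S.card ≤ 4) : M'.eRk (v '' S) = vamosRk S := by
    rw [hext.eRk_eq (hM.image_subset_ground _), hM.eRk_image hv hS]
  have hL4 : L.card ≤ 4 := (Finset.card_le_card (hL.trans Finset.inter_subset_left)).trans hC
  refine M'.mem_closure_of_eRk_add_eRk_lt hext.mem_ground hpC hpC'
    (by rw [← image_inter hv]; exact image_mono (by exact_mod_cast hL)) ?_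
  rw [hrank hC, hrank hC', hrank hL4]
  calc (vamosRk C : ℕ∞) + vamosRk C' < vamosRk L + 1 + vamosRk T := by exact_mod_cast hlt
    _ ≤ vamosRk L + 1 + M'.eRk (v '' C ∪ v '' C') := by
      rw [← hrank hT4, ← image_union]
      gcongr
      exact M'.eRk_mono (image_mono (by exact_mod_cast hT))

end IsVamos

/-- The Vámos matroid `V₈` has no extension by a non-loop element `p` lying on both the
line spanned by `{a₁, a₁'}` and the line spanned by `{b₁, b₁'}`. -/
theorem vamos_no_extension (a₁ a₁' a₂ a₂' b₁ b₁' b₂ b₂' : α)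
    (hnd : ([a₁, a₁', a₂, a₂', b₁, b₁', b₂, b₂'] : List α).Nodup)
    (M : Matroid α)
    (hE : M.E = {a₁, a₁', a₂, a₂', b₁, b₁', b₂, b₂'})
    (hIndep : ∀ I : Set α, M.Indep I ↔ I ⊆ M.E ∧ I.ncard ≤ 4 ∧
      I ∉ ({{a₁, a₁', a₂, a₂'}, {a₁, a₁', b₁, b₁'}, {a₁, a₁', b₂, b₂'},
        {a₂, a₂', b₁, b₁'}, {b₁, b₁', b₂, b₂'}} : Set (Set α))) :
    ¬ ∃ (M' : Matroid α) (p : α), ExtBy M' M p ∧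
      p ∈ M'.closure {a₁, a₁'} ∩ M'.closure {b₁, b₁'} ∧ M'.Indep {p} := by
  rintro ⟨M', p, hext, ⟨hpa, hpb⟩, hp⟩
  set v : Fin 8 → α := ![a₁, a₁', a₂, a₂', b₁, b₁', b₂, b₂'] with hv_def
  have hv : Injective v := by
    rw [← List.nodup_ofFn]
    simpa [hv_def] using hnd
  have hM : IsVamos M v := isVamos_vecCons hE hIndep
  have hline {S T : Finset (Fin 8)} (hST : S ⊆ T) (hS : p ∈ M'.closure (v '' S)) :
      p ∈ M'.closure (v '' T) :=
    M'.closure_subset_closure (image_mono (Finset.coe_subset.2 hST)) hS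
  have ha₁ : p ∈ M'.closure (v '' ({0, 1} : Finset (Fin 8))) := by
    simpa [hv_def, Set.image_insert_eq] using hpa
  have hb₁ : p ∈ M'.closure (v '' ({4, 5} : Finset (Fin 8))) := by
    simpa [hv_def, Set.image_insert_eq] using hpb
  have ha₂ : p ∈ M'.closure (v '' ({2, 3} : Finset (Fin 8))) :=
    hM.mem_closure_of_extBy hv hext (C := {0, 1, 2, 3}) (C' := {2, 3, 4, 5}) (T := {0, 2, 3, 4})
      (hline (by decide) ha₁) (hline (by decide) hb₁) (by decide)
  have hb₂ : p ∈ M'.closure (v '' ({6, 7} : Finset (Fin 8))) :=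
    hM.mem_closure_of_extBy hv hext (C := {0, 1, 6, 7}) (C' := {4, 5, 6, 7}) (T := {0, 4, 6, 7})
      (hline (by decide) ha₁) (hline (by decide) hb₁) (by decide)
  have hloop := hM.mem_closure_of_extBy hv hext (L := ∅) (T := {2, 3, 6, 7}) ha₂ hb₂ (by decide)
  exact (Matroid.indep_singleton.1 hp).not_isLoop
    (by simpa [Matroid.isLoop_iff, ← Matroid.closure_empty] using hloop)
end

section
/- Let (A, B) be an exact 3-separation of a matroid M, and let A₀ be an A-strand and B₀ a B-strand with ⊓(A₀, B₀) = 1. If M has an extension by an element p in which both A₀ ∪ {p} and B₀ ∪ {p} are circuits, then M has no A-strand A₁ ≠ A₀ and B-strand B₁ ≠ B₀ such that exactly two of ⊓(A₀, B₁), ⊓(A₁, B₀), and ⊓(A₁, B₁) equal one. -/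
open Set

variable {α : Type*}

/-- `e` and `f` are clones: interchanging them is an automorphism of `M`. -/
def mClones [DecidableEq α] (M : Matroid α) (e f : α) : Prop :=
  M.mapEquiv (Equiv.swap e f) = M

/-- `e` and `f` are independent clones. -/
def mIndepClones [DecidableEq α] (M : Matroid α) (e f : α) : Prop :=
  mClones M e f ∧ M.Indep {e, f}

/-- `z` is fixed in `M`: there is no extension of `M` by an element `z'` in which
`z` and `z'` are independent clones. -/
def mFixed [DecidableEq α] (M : Matroid α) (z : α) : Prop :=
  ¬ ∃ (M' : Matroid α) (z' : α), ExtBy M' M z' ∧ mIndepClones M' z z'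

/-- `M''` is obtained from `M` by freely adding the independent clones `x` and `y`
to the guts line of the separation `(A, B)`. -/
def GutsPairExt [DecidableEq α] (M'' M : Matroid α) (A B : Set α) (x y : α) : Prop :=
  ExtBy2 M'' M x y ∧ mIndepClones M'' x y ∧
    ({x, y} : Set α) ⊆ M''.closure A ∩ M''.closure B

/-- Contraction of the set `C` from `M`, defined by duality. -/
noncomputable def mContract (M : Matroid α) (C : Set α) : Matroid α :=
  (M.dual.restrict (M.E \ C)).dual

/-- `S` is a separator of the matroid `N`. -/
def mSeparator (N : Matroid α) (S : Set α) : Prop :=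
  (mRk N S : ℤ) + (mRk N (N.E \ S) : ℤ) = (mRk N N.E : ℤ)

/-- Adjacency in the strand graph of `(M, A, B)`: a strand on one side is adjacent to a
strand on the other side when their local connectivity is one. -/
def StrandAdj (M : Matroid α) (A B : Set α) (S T : Set α) : Prop :=
  ((Strand M A B S ∧ Strand M B A T) ∨ (Strand M B A S ∧ Strand M A B T)) ∧ mConn M S T = 1

/-- Exactly two of the three integers are equal to one. -/
def ExactlyTwoOne (a b c : ℤ) : Prop :=
  (a = 1 ∧ b = 1 ∧ c ≠ 1) ∨ (a = 1 ∧ c = 1 ∧ b ≠ 1) ∨ (b = 1 ∧ c = 1 ∧ a ≠ 1)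

/-!
The circuits `A₀ ∪ {p}` and `B₀ ∪ {p}` of the extension put the nonloop `p` in the closures of
`A₀` and `B₀`. Membership of `p` in closures propagates along the strand graph: if `p ∈ cl(X)` for
a strand `X` on one side and `p ∈ cl(T₀)` for a strand `T₀` on the other, then submodularity on
`X ∪ Y ∪ {p}` and `T₀ ∪ Y ∪ {p}`, together with `⊓(X, T₀ ∪ Y) ≤ 1`, gives `p ∈ cl(Y)` for every
strand `Y` with `⊓(X, Y) = 1`. Conversely, a nonloop in `cl(X) ∩ cl(Y)` forces `⊓(X, Y) ≥ 1`.
So whichever two of the three connectivities equal one, `p` spreads to `cl(A₁)` and `cl(B₁)`,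
and the third connectivity is one as well.
-/

open Matroid

section Rank

variable {M : Matroid α} {X Y R : Set α} {e : α}

lemma mRk_eq_toNat_eRk (M : Matroid α) (X : Set α) : mRk M X = (M.eRk X).toNat := by
  obtain ⟨I, hI⟩ := M.exists_isBasis' X
  rw [mRk]
  by_cases hfin : I.Finite
  · refine IsGreatest.csSup_eq ⟨⟨I, ⟨hI.indep, hI.subset⟩, by rw [ncard_def, hI.encard_eq_eRk]⟩, ?_⟩
    rintro _ ⟨J, ⟨hJ, hJX⟩, rfl⟩
    rw [ncard_def, ← hI.encard_eq_eRk]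
    exact ENat.toNat_le_toNat (hI.encard_eq_eRk ▸ hJ.encard_le_eRk_of_subset hJX)
      hfin.encard_lt_top.ne
  · rw [← hI.encard_eq_eRk, Set.Infinite.encard_eq hfin, ENat.toNat_top]
    refine Nat.sSup_of_not_bddAbove fun ⟨n, hn⟩ ↦ ?_
    obtain ⟨J, hJI, -, hJ⟩ := Set.Infinite.exists_subset_ncard_eq hfin (n + 1)
    have := hn ⟨J, ⟨hI.indep.subset hJI, hJI.trans hI.subset⟩, hJ⟩
    omega

lemma mRk_eq_zero_of_not_isRkFinite (h : ¬ M.IsRkFinite X) : mRk M X = 0 := by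
  rw [mRk_eq_toNat_eRk, eRk_eq_top_iff.2 h, ENat.toNat_top]

lemma Matroid.IsRkFinite.natCast_mRk (h : M.IsRkFinite X) : (mRk M X : ℕ∞) = M.eRk X := by
  rw [mRk_eq_toNat_eRk, ENat.natCast_toNat (eRk_ne_top_iff.2 h)]

lemma mRk_mono (hY : M.IsRkFinite Y) (hXY : X ⊆ Y) : mRk M X ≤ mRk M Y := by
  rw [← Nat.cast_le (α := ℕ∞), hY.natCast_mRk, (hY.subset hXY).natCast_mRk]
  exact M.eRk_mono hXY

lemma mRk_union_add_mRk_inter_le (hX : M.IsRkFinite X) (hY : M.IsRkFinite Y) :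
    mRk M (X ∪ Y) + mRk M (X ∩ Y) ≤ mRk M X + mRk M Y := by
  rw [← Nat.cast_le (α := ℕ∞), Nat.cast_add, Nat.cast_add, (hX.union hY).natCast_mRk,
    hX.inter_right.natCast_mRk, hX.natCast_mRk, hY.natCast_mRk, add_comm]
  exact M.eRk_inter_add_eRk_union_le X Y

lemma mRk_insert_of_mem_closure (h : e ∈ M.closure X) : mRk M (insert e X) = mRk M X := by
  rw [mRk_eq_toNat_eRk, mRk_eq_toNat_eRk, ← eRk_insert_closure_eq, insert_eq_of_mem h,
    eRk_closure_eq]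

lemma mem_closure_of_mRk_insert_le (hX : M.IsRkFinite X) (he : e ∈ M.E)
    (h : mRk M (insert e X) ≤ mRk M X) : e ∈ M.closure X := by
  by_contra hcl
  rw [← Nat.cast_le (α := ℕ∞), (hX.insert e).natCast_mRk, hX.natCast_mRk,
    eRk_insert_eq_add_one ⟨he, hcl⟩] at h
  exact h.not_gt ((ENat.lt_add_one_iff (eRk_ne_top_iff.2 hX)).2 le_rfl)

lemma mRk_restrict (hXR : X ⊆ R) : mRk (M ↾ R) X = mRk M X := by
  rw [mRk_eq_toNat_eRk, mRk_eq_toNat_eRk, restrict_eRk_eq M hXR]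

end Rank

section LocalConn

variable {M : Matroid α} {S T T₀ Q R : Set α} {p : α}

lemma mConn_comm (M : Matroid α) (S T : Set α) : mConn M S T = mConn M T S := by
  rw [mConn, mConn, union_comm]; ring

lemma mConn_restrict (hS : S ⊆ R) (hT : T ⊆ R) : mConn (M ↾ R) S T = mConn M S T := by
  rw [mConn, mConn, mRk_restrict hS, mRk_restrict hT, mRk_restrict (union_subset hS hT)]

lemma mConn_empty_left (M : Matroid α) (T : Set α) : mConn M ∅ T = 0 := by
  rw [mConn, empty_union, mRk_eq_toNat_eRk M ∅, eRk_empty]; simp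

lemma mConn_le_of_subset_right (hS : M.IsRkFinite S) (hQ : M.IsRkFinite Q) (hTQ : T ⊆ Q) :
    mConn M S T ≤ mConn M S Q := by
  have hsub := mRk_union_add_mRk_inter_le (hS.union (hQ.subset hTQ)) hQ
  rw [union_assoc, union_eq_self_of_subset_left hTQ] at hsub
  have hT := mRk_mono hQ.inter_left (subset_inter (subset_union_right (s := S)) hTQ)
  simp only [mConn]
  omega

lemma mConn_of_not_isRkFinite_left (hS : ¬ M.IsRkFinite S) : mConn M S T = mRk M T := by
  rw [mConn, mRk_eq_zero_of_not_isRkFinite hS,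
    mRk_eq_zero_of_not_isRkFinite fun h ↦ hS (h.subset subset_union_left)]
  ring

/-- If `Q` has infinite rank, `⊓(S, Q) = r(S)`, so the bound then comes from `⊓(S, T) ≤ r(S)`. -/
lemma mConn_le_one_of_subset (hS : M.IsRkFinite S) (hSQ : mConn M S Q = 1) (hTQ : T ⊆ Q) :
    mConn M S T ≤ 1 := by
  by_cases hQ : M.IsRkFinite Q
  · exact hSQ ▸ mConn_le_of_subset_right hS hQ hTQ
  have hST : mRk M T ≤ mRk M (S ∪ T) := by
    by_cases hT : M.IsRkFinite T
    · exact mRk_mono (hS.union hT) subset_union_right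
    · simp [mRk_eq_zero_of_not_isRkFinite hT]
  rw [mConn_comm, mConn_of_not_isRkFinite_left hQ] at hSQ
  simp only [mConn]
  omega

lemma one_le_mConn_of_mem_closure (hp : M.IsNonloop p) (hS : M.IsRkFinite S)
    (hT : M.IsRkFinite T) (hpS : p ∈ M.closure S) (hpT : p ∈ M.closure T) :
    1 ≤ mConn M S T := by
  have hsub := mRk_union_add_mRk_inter_le (hS.insert p) (hT.insert p)
  rw [mRk_insert_of_mem_closure hpS, mRk_insert_of_mem_closure hpT] at hsub
  have hunion := mRk_mono ((hS.insert p).union (hT.insert p))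
    (union_subset_union (subset_insert p S) (subset_insert p T))
  have hp1 : 1 ≤ mRk M (insert p S ∩ insert p T) := by
    have := mRk_mono (hS.insert p).inter_right
      (show {p} ⊆ insert p S ∩ insert p T by simp)
    rwa [mRk_eq_toNat_eRk M {p}, hp.eRk_eq, ENat.toNat_one] at this
  simp only [mConn]
  omega

lemma mem_closure_of_mConn_eq_one (hS : M.IsRkFinite S) (hT₀ : M.IsRkFinite T₀)
    (hT : M.IsRkFinite T) (hp : p ∈ M.E) (hpS : p ∈ M.closure S) (hpT₀ : p ∈ M.closure T₀)
    (hle : mConn M S (T₀ ∪ T) ≤ 1) (hST : mConn M S T = 1) : p ∈ M.closure T := by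
  refine mem_closure_of_mRk_insert_le hT hp ?_
  have hsub := mRk_union_add_mRk_inter_le ((hS.union hT).insert p) ((hT₀.union hT).insert p)
  rw [mRk_insert_of_mem_closure (M.closure_subset_closure subset_union_left hpS),
    mRk_insert_of_mem_closure (M.closure_subset_closure subset_union_left hpT₀)] at hsub
  have hunion := mRk_mono (((hS.union hT).insert p).union ((hT₀.union hT).insert p))
    (show S ∪ (T₀ ∪ T) ⊆ insert p (S ∪ T) ∪ insert p (T₀ ∪ T) by
      intro x; simp only [mem_union, mem_insert_iff]; tauto)
  have hinter := mRk_mono ((hS.union hT).insert p).inter_right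
    (show insert p T ⊆ insert p (S ∪ T) ∩ insert p (T₀ ∪ T) by
      intro x; simp only [mem_union, mem_insert_iff, mem_inter_iff]; tauto)
  simp only [mConn] at hle hST
  omega

end LocalConn

section Strand

variable {M : Matroid α} {P Q R S T T₀ : Set α} {p : α}

lemma strand_restrict_iff (hP : P ⊆ R) (hQ : Q ⊆ R) :
    Strand (M ↾ R) P Q S ↔ Strand M P Q S := by
  refine and_congr_right fun hSP ↦ ?_
  have hR : ∀ S' ⊆ S, mConn (M ↾ R) S' Q = mConn M S' Q :=
    fun S' hS' ↦ mConn_restrict (hS'.trans (hSP.trans hP)) hQ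
  rw [hR S Subset.rfl]
  exact and_congr_right fun _ ↦ forall_congr' fun S' ↦ imp_congr_right fun h ↦ by
    rw [hR S' h.subset]

lemma Strand.nonempty (h : Strand M P Q S) : S.Nonempty := by
  rw [nonempty_iff_ne_empty]
  rintro rfl
  simpa [mConn_empty_left] using h.2.1

/-- `mRk` is `0` on sets of infinite rank, so every such `S` has `⊓(S, Q) = r(Q)`; removing one
element keeps the rank infinite, contradicting minimality. -/
lemma Strand.isRkFinite (h : Strand M P Q S) : M.IsRkFinite S := by
  by_contra hS
  obtain ⟨x, hx⟩ := h.nonempty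
  have hS' : ¬ M.IsRkFinite (S \ {x}) := by rwa [IsRkFinite.sdiff_singleton_iff]
  refine h.2.2 (S \ {x}) (sdiff_singleton_ssubset.2 hx) ?_
  rw [mConn_of_not_isRkFinite_left hS', ← mConn_of_not_isRkFinite_left hS]
  exact h.2.1

lemma Strand.mem_closure_of_mConn_eq_one (hS : Strand M P Q S) (hT₀ : Strand M Q P T₀)
    (hT : Strand M Q P T) (hp : p ∈ M.E) (hpS : p ∈ M.closure S) (hpT₀ : p ∈ M.closure T₀)
    (hST : mConn M S T = 1) : p ∈ M.closure T :=
  _root_.mem_closure_of_mConn_eq_one hS.isRkFinite hT₀.isRkFinite hT.isRkFinite hp hpS hpT₀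
    (mConn_le_one_of_subset hS.isRkFinite hS.2.1 (union_subset hT₀.1 hT.1)) hST

lemma Strand.mConn_eq_one_of_mem_closure (hS : Strand M P Q S) (hT : Strand M Q P T)
    (hp : M.IsNonloop p) (hpS : p ∈ M.closure S) (hpT : p ∈ M.closure T) : mConn M S T = 1 :=
  le_antisymm (mConn_le_one_of_subset hS.isRkFinite hS.2.1 hT.1)
    (one_le_mConn_of_mem_closure hp hS.isRkFinite hT.isRkFinite hpS hpT)

end Strand

theorem not_exactlyTwoOne_of_mem_closure {M : Matroid α} {A B A₀ B₀ A₁ B₁ : Set α} {p : α}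
    (hA₀ : Strand M A B A₀) (hB₀ : Strand M B A B₀) (hA₁ : Strand M A B A₁)
    (hB₁ : Strand M B A B₁) (hp : M.IsNonloop p) (hpA₀ : p ∈ M.closure A₀)
    (hpB₀ : p ∈ M.closure B₀) :
    ¬ ExactlyTwoOne (mConn M A₀ B₁) (mConn M A₁ B₀) (mConn M A₁ B₁) := by
  rintro (⟨h01, h10, h11⟩ | ⟨h01, h11, h10⟩ | ⟨h10, h11, h01⟩)
  · have hpB₁ := hA₀.mem_closure_of_mConn_eq_one hB₀ hB₁ hp.mem_ground hpA₀ hpB₀ h01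
    have hpA₁ := hB₀.mem_closure_of_mConn_eq_one hA₀ hA₁ hp.mem_ground hpB₀ hpA₀
      (mConn_comm M _ _ ▸ h10)
    exact h11 (hA₁.mConn_eq_one_of_mem_closure hB₁ hp hpA₁ hpB₁)
  · have hpB₁ := hA₀.mem_closure_of_mConn_eq_one hB₀ hB₁ hp.mem_ground hpA₀ hpB₀ h01
    have hpA₁ := hB₁.mem_closure_of_mConn_eq_one hA₀ hA₁ hp.mem_ground hpB₁ hpA₀
      (mConn_comm M _ _ ▸ h11)
    exact h10 (hA₁.mConn_eq_one_of_mem_closure hB₀ hp hpA₁ hpB₀)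
  · have hpA₁ := hB₀.mem_closure_of_mConn_eq_one hA₀ hA₁ hp.mem_ground hpB₀ hpA₀
      (mConn_comm M _ _ ▸ h10)
    have hpB₁ := hA₁.mem_closure_of_mConn_eq_one hB₀ hB₁ hp.mem_ground hpA₁ hpB₀ h11
    exact h01 (hA₀.mConn_eq_one_of_mem_closure hB₁ hp hpA₀ hpB₁)

lemma mCircuit_iff_isCircuit {M : Matroid α} {C : Set α} : mCircuit M C ↔ M.IsCircuit C := by
  rw [isCircuit_def, minimal_iff_forall_ssubset]
  rfl

lemma Matroid.IsCircuit.mem_closure_of_insert {M : Matroid α} {X : Set α} {e : α}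
    (h : M.IsCircuit (insert e X)) : e ∈ M.closure X := by
  have := h.mem_closure_sdiff_singleton_of_mem (mem_insert e X)
  rw [insert_sdiff_of_mem X (mem_singleton e)] at this
  exact M.closure_subset_closure sdiff_subset this

namespace ExtBy

variable {M M' : Matroid α} {p : α} {P Q S T : Set α}

lemma mConn_eq (h : ExtBy M' M p) (hS : S ⊆ M.E) (hT : T ⊆ M.E) :
    mConn M S T = mConn M' S T := by
  conv_lhs => rw [← h.2.2]
  exact mConn_restrict hS hT

lemma strand_iff (h : ExtBy M' M p) (hP : P ⊆ M.E) (hQ : Q ⊆ M.E) :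
    Strand M P Q S ↔ Strand M' P Q S := by
  conv_lhs => rw [← h.2.2]
  exact strand_restrict_iff hP hQ

end ExtBy

theorem extension_forbids_vamos_pattern_general (M : Matroid α) (A B A₀ B₀ : Set α)
    (hsep : Exact3Sep M A B)
    (hA₀ : Strand M A B A₀) (hB₀ : Strand M B A B₀)
    (hext : ∃ (M' : Matroid α) (p : α), ExtBy M' M p ∧
      mCircuit M' (insert p A₀) ∧ mCircuit M' (insert p B₀)) :
    ¬ ∃ A₁ B₁, Strand M A B A₁ ∧ Strand M B A B₁ ∧ A₁ ≠ A₀ ∧ B₁ ≠ B₀ ∧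
      ExactlyTwoOne (mConn M A₀ B₁) (mConn M A₁ B₀) (mConn M A₁ B₁) := by
  rintro ⟨A₁, B₁, hA₁, hB₁, -, -, hpat⟩
  obtain ⟨M', p, hM', hCA, hCB⟩ := hext
  rw [mCircuit_iff_isCircuit] at hCA hCB
  have hAE : A ⊆ M.E := hsep.2.1 ▸ subset_union_left
  have hBE : B ⊆ M.E := hsep.2.1 ▸ subset_union_right
  rw [hM'.mConn_eq (hA₀.1.trans hAE) (hB₁.1.trans hBE),
    hM'.mConn_eq (hA₁.1.trans hAE) (hB₀.1.trans hBE),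
    hM'.mConn_eq (hA₁.1.trans hAE) (hB₁.1.trans hBE)] at hpat
  obtain ⟨a, ha⟩ := hA₀.nonempty
  have hp : M'.IsNonloop p := hCA.isNonloop_of_mem
    (nontrivial_of_mem_mem_ne (mem_insert p A₀) (mem_insert_of_mem p ha)
      fun hpa ↦ hM'.1 (hpa ▸ hAE (hA₀.1 ha)))
    (mem_insert p A₀)
  rw [hM'.strand_iff hAE hBE] at hA₀ hA₁
  rw [hM'.strand_iff hBE hAE] at hB₀ hB₁
  exact not_exactlyTwoOne_of_mem_closure hA₀ hB₀ hA₁ hB₁ hp hCA.mem_closure_of_insert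
    hCB.mem_closure_of_insert hpat

/-- If `M` extends by `p` so that `A₀ ∪ {p}` and `B₀ ∪ {p}` are circuits, then there are no
strands `A₁ ≠ A₀` and `B₁ ≠ B₀` with exactly two of the three cross local connectivities
equal to one. -/
theorem extension_forbids_vamos_pattern (M : Matroid α) (A B A₀ B₀ : Set α)
    (hsep : Exact3Sep M A B)
    (hA₀ : Strand M A B A₀) (hB₀ : Strand M B A B₀)
    (hconn : mConn M A₀ B₀ = 1)
    (hext : ∃ (M' : Matroid α) (p : α), ExtBy M' M p ∧
      mCircuit M' (insert p A₀) ∧ mCircuit M' (insert p B₀)) :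
    ¬ ∃ A₁ B₁, Strand M A B A₁ ∧ Strand M B A B₁ ∧ A₁ ≠ A₀ ∧ B₁ ≠ B₀ ∧
      ExactlyTwoOne (mConn M A₀ B₁) (mConn M A₁ B₀) (mConn M A₁ B₁) :=
  extension_forbids_vamos_pattern_general M A B A₀ B₀ hsep hA₀ hB₀ hext
end
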